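/- For every ν ∈ ℝ and every η ∈ H²(ℝ;ℝ) (i.e. η with weak derivatives η', η'' ∈ L²(ℝ)), there exists a sequence (u_n) of smooth real functions on ℝ such that: (i) u_n and x ↦ (1+|x|)u_n(x) are integrable on ℝ and u_n together with all its derivatives belongs to L²(ℝ); (ii) ∫_ℝ u_n dx = ν for every n; (iii) ⟨u_n, η⟩_{H¹} = ∫_ℝ (u_n η + u_n' η') dx = 0 for every n; (iv) ‖u_n‖_{L²} + ‖u_n'‖_{L²} → 0 as n → ∞, i.e. u_n → 0 in H¹(ℝ). -/

import Mathlib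

open MeasureTheory Real Filter Set
open Polynomial
noncomputable section

/-- Membership in the class X_s of smooth functions which are integrable with weight
(1+|x|) and all of whose derivatives are square-integrable. -/
def goodFn (f : ℝ → ℝ) : Prop :=
  ContDiff ℝ (⊤ : ℕ∞) f ∧ Integrable f (volume : Measure ℝ) ∧
  Integrable (fun x : ℝ => (1 + |x|) * f x) (volume : Measure ℝ) ∧
  ∀ k : ℕ, MemLp (iteratedDeriv k f) 2 (volume : Measure ℝ)

namespace Stmt13

/-- polynomial times gaussian -/
def pg (b : ℝ) (p : ℝ[X]) : ℝ → ℝ := fun x => p.eval x * Real.exp (-b * x ^ 2)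

lemma contDiff_eval (p : ℝ[X]) : ContDiff ℝ (⊤ : ℕ∞) (fun x : ℝ => p.eval x) := by
  induction p using Polynomial.induction_on' with
  | monomial n a => simpa [Polynomial.eval_monomial] using (contDiff_const.mul (contDiff_id.pow n))
  | add p q hp hq =>
    have : (fun x : ℝ => (p + q).eval x) = fun x => p.eval x + q.eval x := by funext x; simp
    rw [this]; exact hp.add hq

lemma contDiff_pg (b : ℝ) (p : ℝ[X]) : ContDiff ℝ (⊤ : ℕ∞) (pg b p) :=
  (contDiff_eval p).mul (Real.contDiff_exp.comp (contDiff_const.mul (contDiff_id.pow 2)))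

lemma continuous_pg (b : ℝ) (p : ℝ[X]) : Continuous (pg b p) :=
  (contDiff_pg b p).continuous

lemma deriv_pg (b : ℝ) (p : ℝ[X]) :
    deriv (pg b p) = pg b (derivative p - C (2*b) * X * p) := by
  funext x
  have h2 : HasDerivAt (fun x : ℝ => Real.exp (-b * x ^ 2))
      ((-b * (2 * x)) * Real.exp (-b * x ^ 2)) x := by
    have h0 : HasDerivAt (fun x : ℝ => -b * x ^ 2) (-b * (2 * x)) x := by
      simpa using ((hasDerivAt_pow 2 x).const_mul (-b))
    simpa [mul_comm] using h0.exp
  have h := (p.hasDerivAt x).fun_mul h2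
  rw [show pg b p = fun x => p.eval x * Real.exp (-b * x ^ 2) from rfl, h.deriv]
  simp [pg, Polynomial.eval_mul, Polynomial.eval_sub]
  ring

lemma iteratedDeriv_pg (b : ℝ) (p : ℝ[X]) (k : ℕ) :
    ∃ q : ℝ[X], iteratedDeriv k (pg b p) = pg b q := by
  induction k with
  | zero => exact ⟨p, by simp⟩
  | succ k ih =>
    obtain ⟨q, hq⟩ := ih
    exact ⟨_, by rw [iteratedDeriv_succ, hq, deriv_pg]⟩

lemma integrable_npow_gauss {b : ℝ} (hb : 0 < b) (n : ℕ) :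
    Integrable (fun x : ℝ => x ^ n * Real.exp (-b * x ^ 2)) := by
  have h := integrable_rpow_mul_exp_neg_mul_sq hb (s := (n : ℝ))
    (by exact_mod_cast lt_of_lt_of_le neg_one_lt_zero (Nat.cast_nonneg n))
  simpa [Real.rpow_natCast] using h

lemma integrable_pg {b : ℝ} (hb : 0 < b) (p : ℝ[X]) : Integrable (pg b p) := by
  unfold pg
  induction p using Polynomial.induction_on' with
  | monomial n a =>
    simp only [Polynomial.eval_monomial]
    have := (integrable_npow_gauss hb n).const_mul a
    simpa [mul_assoc] using this
  | add p q hp hq =>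
    have : (fun x : ℝ => (p + q).eval x * Real.exp (-b * x ^ 2)) =
        fun x => p.eval x * Real.exp (-b * x ^ 2) + q.eval x * Real.exp (-b * x ^ 2) := by
      funext x; simp; ring
    rw [this]; exact hp.add hq

lemma sq_pg (b : ℝ) (p : ℝ[X]) (x : ℝ) : pg b p x ^ 2 = pg (2*b) (p*p) x := by
  simp only [pg, Polynomial.eval_mul]
  rw [mul_pow]
  have : Real.exp (-b * x ^ 2) ^ 2 = Real.exp (-(2*b) * x ^ 2) := by
    rw [sq, ← Real.exp_add]; ring_nf
  rw [this, sq]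

lemma integrable_sq_pg {b : ℝ} (hb : 0 < b) (p : ℝ[X]) :
    Integrable (fun x => pg b p x ^ 2) := by
  have : (fun x => pg b p x ^ 2) = pg (2*b) (p*p) := by
    funext x; exact sq_pg b p x
  rw [this]; exact integrable_pg (by linarith) _

lemma memL2_pg {b : ℝ} (hb : 0 < b) (p : ℝ[X]) : MemLp (pg b p) 2 (volume : Measure ℝ) := by
  rw [memLp_two_iff_integrable_sq (continuous_pg b p).aestronglyMeasurable]
  exact integrable_sq_pg hb p

lemma integrable_weight_pg {b : ℝ} (hb : 0 < b) (p : ℝ[X]) :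
    Integrable (fun x : ℝ => (1 + |x|) * pg b p x) := by
  have h1 : Integrable (fun x : ℝ => |x| * pg b p x) := by
    refine Integrable.mono' ((integrable_pg hb (X * p)).abs) ?_ ?_
    · exact (continuous_abs.mul (continuous_pg b p)).aestronglyMeasurable
    · filter_upwards with x
      rw [Real.norm_eq_abs, abs_mul, abs_abs]
      have : pg b (X * p) x = x * pg b p x := by
        simp [pg]; ring
      rw [this, abs_mul]
  have := (integrable_pg hb p).add h1
  refine this.congr ?_
  filter_upwards with x
  simp only [Pi.add_apply]
  ring

lemma goodFn_pg {b : ℝ} (hb : 0 < b) (p : ℝ[X]) : goodFn (pg b p) := by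
  refine ⟨contDiff_pg b p, integrable_pg hb p, integrable_weight_pg hb p, fun k => ?_⟩
  obtain ⟨q, hq⟩ := iteratedDeriv_pg b p k
  rw [hq]; exact memL2_pg hb q

lemma diffAt_iter {f : ℝ → ℝ} (hf : ContDiff ℝ (⊤ : ℕ∞) f) (k : ℕ) :
    Differentiable ℝ (iteratedDeriv k f) :=
  hf.differentiable_iteratedDeriv k (by exact_mod_cast lt_top_iff_ne_top.2 (by simp))

lemma iteratedDeriv_combo {f g : ℝ → ℝ} (hf : ContDiff ℝ (⊤ : ℕ∞) f) (hg : ContDiff ℝ (⊤ : ℕ∞) g)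
    (a c : ℝ) (k : ℕ) :
    iteratedDeriv k (fun x => a * f x + c * g x) =
      fun x => a * iteratedDeriv k f x + c * iteratedDeriv k g x := by
  induction k with
  | zero => simp
  | succ k ih =>
    rw [iteratedDeriv_succ, ih, iteratedDeriv_succ, iteratedDeriv_succ]
    funext x
    rw [deriv_fun_add (((diffAt_iter hf k) x).const_mul a) (((diffAt_iter hg k) x).const_mul c),
      deriv_const_mul a ((diffAt_iter hf k) x), deriv_const_mul c ((diffAt_iter hg k) x)]

lemma deriv_combo {f g : ℝ → ℝ} (hf : ContDiff ℝ (⊤ : ℕ∞) f) (hg : ContDiff ℝ (⊤ : ℕ∞) g) (a c : ℝ) :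
    deriv (fun x => a * f x + c * g x) = fun x => a * deriv f x + c * deriv g x := by
  have := iteratedDeriv_combo hf hg a c 1
  simpa [iteratedDeriv_one] using this

lemma integrable_mul_L2 {f g : ℝ → ℝ} (hf : MemLp f 2 (volume : Measure ℝ))
    (hg : MemLp g 2 (volume : Measure ℝ)) :
    Integrable (fun x => f x * g x) (volume : Measure ℝ) := by
  have h := MeasureTheory.L2.integrable_inner (𝕜 := ℝ) (hf.toLp f) (hg.toLp g)
  refine h.congr ?_
  filter_upwards [hf.coeFn_toLp, hg.coeFn_toLp] with x h2 h3
  rw [h2, h3]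
  simp [RCLike.inner_apply, mul_comm]

lemma cauchy_schwarz {f g : ℝ → ℝ} (hf : MemLp f 2 (volume : Measure ℝ))
    (hg : MemLp g 2 (volume : Measure ℝ)) :
    |∫ x, f x * g x| ≤ Real.sqrt (∫ x, f x ^ 2) * Real.sqrt (∫ x, g x ^ 2) := by
  have hconj : Real.HolderConjugate 2 2 := (Real.holderConjugate_iff_eq_conjExponent one_lt_two).2 (by norm_num)
  have hf2 : MemLp f (ENNReal.ofReal 2) volume := by
    rwa [show ENNReal.ofReal 2 = 2 by norm_num]
  have hg2 : MemLp g (ENNReal.ofReal 2) volume := by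
    rwa [show ENNReal.ofReal 2 = 2 by norm_num]
  have h := MeasureTheory.integral_mul_norm_le_Lp_mul_Lq hconj hf2 hg2
  have h1 : |∫ x, f x * g x| ≤ ∫ x, ‖f x‖ * ‖g x‖ := by
    calc |∫ x, f x * g x| ≤ ∫ x, ‖f x * g x‖ := by
          simpa [Real.norm_eq_abs] using norm_integral_le_integral_norm (fun x => f x * g x)
      _ = ∫ x, ‖f x‖ * ‖g x‖ := by simp [norm_mul]
  refine h1.trans (h.trans_eq ?_)
  have e1 : (∫ x, ‖f x‖ ^ (2:ℝ)) = ∫ x, f x ^ 2 := by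
    congr 1; funext x
    rw [show ‖f x‖ ^ (2:ℝ) = ‖f x‖ ^ (2:ℕ) by rw [← Real.rpow_natCast ‖f x‖ 2]; norm_num]
    simp [sq_abs]
  have e2 : (∫ x, ‖g x‖ ^ (2:ℝ)) = ∫ x, g x ^ 2 := by
    congr 1; funext x
    rw [show ‖g x‖ ^ (2:ℝ) = ‖g x‖ ^ (2:ℕ) by rw [← Real.rpow_natCast ‖g x‖ 2]; norm_num]
    simp [sq_abs]
  rw [e1, e2, Real.sqrt_eq_rpow, Real.sqrt_eq_rpow]

lemma eLpNorm_eq_sqrt {f : ℝ → ℝ} (hf : MemLp f 2 (volume : Measure ℝ)) :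
    eLpNorm f 2 (volume : Measure ℝ) = ENNReal.ofReal (Real.sqrt (∫ x, f x ^ 2)) := by
  rw [hf.eLpNorm_eq_integral_rpow_norm (by norm_num) (by norm_num)]
  congr 1
  have e1 : (∫ x, ‖f x‖ ^ (2:ENNReal).toReal) = ∫ x, f x ^ 2 := by
    congr 1; funext x
    rw [ENNReal.toReal_ofNat, show ‖f x‖ ^ (2:ℝ) = ‖f x‖ ^ (2:ℕ) by
      rw [← Real.rpow_natCast ‖f x‖ 2]; norm_num]
    simp [sq_abs]
  rw [e1, Real.sqrt_eq_rpow]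
  norm_num

/-- the gaussian -/
def G (b : ℝ) : ℝ → ℝ := fun x => Real.exp (-b * x ^ 2)

lemma G_eq_pg (b : ℝ) : G b = pg b 1 := by
  funext x; simp [G, pg]

lemma integral_G (b : ℝ) : ∫ x, G b x = Real.sqrt (π / b) := integral_gaussian b

lemma integral_sq_G (b : ℝ) : ∫ x, G b x ^ 2 = Real.sqrt (π / (2*b)) := by
  have : (fun x => G b x ^ 2) = fun x => Real.exp (-(2*b) * x ^ 2) := by
    funext x
    rw [G, sq, ← Real.exp_add]; ring_nf
  rw [this, integral_gaussian]

lemma deriv_G (b : ℝ) : deriv (G b) = pg b (-(C (2*b) * X)) := by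
  rw [G_eq_pg, deriv_pg]
  simp

lemma sq_deriv_G_le {b : ℝ} (hb : 0 < b) (x : ℝ) :
    deriv (G b) x ^ 2 ≤ 4 * b * Real.exp (-b * x ^ 2) := by
  rw [deriv_G]
  have h1 : pg b (-(C (2*b) * X)) x = -(2*b*x) * Real.exp (-b * x^2) := by simp [pg]
  rw [h1, mul_pow, neg_pow]
  have hexp : Real.exp (-b*x^2) ^ 2 = Real.exp (-b*x^2) * Real.exp (-b*x^2) := sq _
  have key : b * x^2 * Real.exp (-(b*x^2)) ≤ 1 := by
    have h := Real.add_one_le_exp (b * x^2)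
    have h2 : b * x^2 ≤ Real.exp (b * x^2) := by linarith
    rw [Real.exp_neg]
    calc b * x^2 * (Real.exp (b*x^2))⁻¹ ≤ Real.exp (b*x^2) * (Real.exp (b*x^2))⁻¹ := by
          apply mul_le_mul_of_nonneg_right h2 (by positivity)
      _ = 1 := mul_inv_cancel₀ (Real.exp_pos _).ne'
  have e1 : (2*b*x)^2 * Real.exp (-b*x^2)^2
      = 4*b * ((b * x^2 * Real.exp (-(b*x^2))) * Real.exp (-b*x^2)) := by
    rw [hexp]; ring_nf
  have e2 : ((-1:ℝ))^2 * (2*b*x)^2 * Real.exp (-b*x^2)^2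
      = 4*b * ((b * x^2 * Real.exp (-(b*x^2))) * Real.exp (-b*x^2)) := by
    rw [hexp]; ring_nf
  rw [e2]
  calc 4*b * ((b * x^2 * Real.exp (-(b*x^2))) * Real.exp (-b*x^2))
      ≤ 4*b * (1 * Real.exp (-b*x^2)) := by
        apply mul_le_mul_of_nonneg_left _ (by positivity)
        apply mul_le_mul_of_nonneg_right key (Real.exp_pos _).le
    _ = 4 * b * Real.exp (-b * x^2) := by ring

lemma integral_sq_deriv_G_le {b : ℝ} (hb : 0 < b) :
    ∫ x, deriv (G b) x ^ 2 ≤ 4 * Real.sqrt (π * b) := by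
  have hint : Integrable (fun x => deriv (G b) x ^ 2) := by
    rw [deriv_G]; exact integrable_sq_pg hb _
  have hint2 : Integrable (fun x : ℝ => 4 * b * Real.exp (-b * x ^ 2)) :=
    (integrable_exp_neg_mul_sq hb).const_mul (4*b)
  have h := integral_mono hint hint2 (fun x => sq_deriv_G_le hb x)
  rw [integral_const_mul, integral_gaussian] at h
  refine h.trans_eq ?_
  rw [show π * b = b^2 * (π / b) by field_simp, Real.sqrt_mul (by positivity),
    Real.sqrt_sq hb.le]
  ring

lemma goodFn_G {b : ℝ} (hb : 0 < b) : goodFn (G b) := by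
  rw [G_eq_pg]; exact goodFn_pg hb 1

lemma _root_.goodFn.memL2 {f : ℝ → ℝ} (hf : goodFn f) : MemLp f 2 (volume : Measure ℝ) := by
  have := hf.2.2.2 0
  rwa [iteratedDeriv_zero] at this

lemma _root_.goodFn.deriv_memL2 {f : ℝ → ℝ} (hf : goodFn f) :
    MemLp (deriv f) 2 (volume : Measure ℝ) := by
  have := hf.2.2.2 1
  rwa [iteratedDeriv_one] at this

lemma _root_.goodFn.combo {f g : ℝ → ℝ} (hf : goodFn f) (hg : goodFn g) (a c : ℝ) :
    goodFn (fun x => a * f x + c * g x) := by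
  obtain ⟨hf1, hf2, hf3, hf4⟩ := hf
  obtain ⟨hg1, hg2, hg3, hg4⟩ := hg
  refine ⟨(hf1.const_smul a).add (hg1.const_smul c), ?_, ?_, ?_⟩
  · exact (hf2.const_mul a).add (hg2.const_mul c)
  · have := ((hf3.const_mul a).add (hg3.const_mul c))
    refine this.congr ?_
    filter_upwards with x
    simp only [Pi.add_apply]
    ring
  · intro k
    rw [iteratedDeriv_combo hf1 hg1 a c k]
    exact ((hf4 k).const_mul a).add ((hg4 k).const_mul c)

/-- the H¹ pairing against η -/
def Lf (η f : ℝ → ℝ) : ℝ := ∫ x, (f x * η x + deriv f x * deriv η x)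

section main

variable {η : ℝ → ℝ} (hηL2 : MemLp η 2 (volume : Measure ℝ))
  (hη'L2 : MemLp (deriv η) 2 (volume : Measure ℝ))

include hηL2 hη'L2

lemma integrable_term {f : ℝ → ℝ} (hf : goodFn f) :
    Integrable (fun x => f x * η x + deriv f x * deriv η x) (volume : Measure ℝ) :=
  (integrable_mul_L2 hf.memL2 hηL2).add (integrable_mul_L2 hf.deriv_memL2 hη'L2)

lemma Lf_combo {f g : ℝ → ℝ} (hf : goodFn f) (hg : goodFn g) (a c : ℝ) :
    Lf η (fun x => a * f x + c * g x) = a * Lf η f + c * Lf η g := by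
  have hd : deriv (fun x => a * f x + c * g x) = fun x => a * deriv f x + c * deriv g x :=
    deriv_combo hf.1 hg.1 a c
  have heq : (fun x => (fun x => a * f x + c * g x) x * η x +
      deriv (fun x => a * f x + c * g x) x * deriv η x)
      = fun x => a * (f x * η x + deriv f x * deriv η x)
        + c * (g x * η x + deriv g x * deriv η x) := by
    funext x; rw [hd]; ring
  rw [Lf, heq, integral_add ((integrable_term hηL2 hη'L2 hf).const_mul a)
    ((integrable_term hηL2 hη'L2 hg).const_mul c), integral_const_mul, integral_const_mul]
  rfl

lemma abs_Lf_le {f : ℝ → ℝ} (hf : goodFn f) :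
    |Lf η f| ≤ Real.sqrt (∫ x, f x ^ 2) * Real.sqrt (∫ x, η x ^ 2)
      + Real.sqrt (∫ x, deriv f x ^ 2) * Real.sqrt (∫ x, deriv η x ^ 2) := by
  rw [Lf, integral_add (integrable_mul_L2 hf.memL2 hηL2)
    (integrable_mul_L2 hf.deriv_memL2 hη'L2)]
  refine (abs_add_le _ _).trans (add_le_add ?_ ?_)
  · exact cauchy_schwarz hf.memL2 hηL2
  · exact cauchy_schwarz hf.deriv_memL2 hη'L2

end main

/-! ### the scaled gaussians -/

def Nn (n : ℕ) : ℝ := (n : ℝ) + 1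

lemma Nn_pos (n : ℕ) : 0 < Nn n := by unfold Nn; positivity

def bb (n : ℕ) : ℝ := (Nn n)⁻¹

lemma bb_pos (n : ℕ) : 0 < bb n := by
  have := Nn_pos n; exact inv_pos.2 this

def mm (n : ℕ) : ℝ := Real.sqrt (π * Nn n)

lemma mm_pos (n : ℕ) : 0 < mm n :=
  Real.sqrt_pos.2 (mul_pos pi_pos (Nn_pos n))

lemma one_le_mm (n : ℕ) : 1 ≤ mm n := by
  rw [show (1:ℝ) = Real.sqrt 1 by simp]
  apply Real.sqrt_le_sqrt
  have h1 : (1:ℝ) ≤ Nn n := by simp [Nn]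
  nlinarith [pi_gt_three]

lemma integral_G_bb (n : ℕ) : ∫ x, G (bb n) x = mm n := by
  rw [integral_G, mm]
  congr 1
  rw [bb, division_def, inv_inv]

lemma tendsto_Nn : Tendsto Nn atTop atTop := by
  apply tendsto_atTop_add_const_right
  exact tendsto_natCast_atTop_atTop

lemma tendsto_bb : Tendsto bb atTop (nhds 0) := tendsto_Nn.inv_tendsto_atTop

lemma sqrt_sqrt_inv_eq (x : ℝ) (hx : 0 < x) :
    (Real.sqrt x)⁻¹ * Real.sqrt (Real.sqrt x) = Real.sqrt (Real.sqrt x⁻¹) := by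
  have h2 : 0 < Real.sqrt (Real.sqrt x) := Real.sqrt_pos.2 (Real.sqrt_pos.2 hx)
  have hxs : 0 < Real.sqrt x := Real.sqrt_pos.2 hx
  have key : Real.sqrt (Real.sqrt x) * Real.sqrt (Real.sqrt x) = Real.sqrt x :=
    Real.mul_self_sqrt (Real.sqrt_nonneg x)
  rw [Real.sqrt_inv, Real.sqrt_inv]
  field_simp
  rw [sq, key]

lemma tendsto_sqrt_sqrt_inv :
    Tendsto (fun n => Real.sqrt (Real.sqrt ((π * Nn n)⁻¹))) atTop (nhds 0) := by
  have h0 : Tendsto (fun n => (π * Nn n)⁻¹) atTop (nhds 0) :=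
    (tendsto_Nn.const_mul_atTop pi_pos).inv_tendsto_atTop
  have hs : Tendsto Real.sqrt (nhds 0) (nhds 0) := by
    have := Real.continuous_sqrt.tendsto 0
    simpa using this
  exact hs.comp (hs.comp h0)

/-- the L² norm factor: (mm n)⁻¹ √(∫ G²) → 0 -/
lemma tendsto_q1 : Tendsto (fun n => (mm n)⁻¹ * Real.sqrt (∫ x, G (bb n) x ^ 2))
    atTop (nhds 0) := by
  refine squeeze_zero
    (fun n => mul_nonneg (inv_nonneg.2 (mm_pos n).le) (Real.sqrt_nonneg _))
    (fun n => ?_) tendsto_sqrt_sqrt_inv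
  have hx : 0 < π * Nn n := mul_pos pi_pos (Nn_pos n)
  rw [integral_sq_G]
  have h1 : Real.sqrt (Real.sqrt (π / (2 * bb n))) ≤ Real.sqrt (Real.sqrt (π * Nn n)) := by
    apply Real.sqrt_le_sqrt; apply Real.sqrt_le_sqrt
    have he : π / (2 * bb n) = π * Nn n / 2 := by
      rw [bb]; field_simp
    rw [he]; linarith
  calc (mm n)⁻¹ * Real.sqrt (Real.sqrt (π / (2 * bb n)))
      ≤ (mm n)⁻¹ * Real.sqrt (Real.sqrt (π * Nn n)) := by
        apply mul_le_mul_of_nonneg_left h1 (inv_nonneg.2 (mm_pos n).le)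
    _ = Real.sqrt (Real.sqrt ((π * Nn n)⁻¹)) := by
        rw [mm]; exact sqrt_sqrt_inv_eq _ hx

lemma tendsto_q2 : Tendsto (fun n => (mm n)⁻¹ * Real.sqrt (∫ x, deriv (G (bb n)) x ^ 2))
    atTop (nhds 0) := by
  have hs : Tendsto Real.sqrt (nhds 0) (nhds 0) := by
    have := Real.continuous_sqrt.tendsto 0
    simpa using this
  have hlim : Tendsto (fun n => Real.sqrt (4 * Real.sqrt (π * bb n))) atTop (nhds 0) := by
    have h0 : Tendsto (fun n => π * bb n) atTop (nhds 0) := by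
      have := tendsto_bb.const_mul π
      simpa using this
    have h1 := hs.comp h0
    have h2 : Tendsto (fun n => 4 * Real.sqrt (π * bb n)) atTop (nhds 0) := by
      have := h1.const_mul (4:ℝ)
      simpa [Function.comp] using this
    have h3 := hs.comp h2
    exact h3.congr (fun n => by simp [Function.comp])
  refine squeeze_zero
    (fun n => mul_nonneg (inv_nonneg.2 (mm_pos n).le) (Real.sqrt_nonneg _))
    (fun n => ?_) hlim
  calc (mm n)⁻¹ * Real.sqrt (∫ x, deriv (G (bb n)) x ^ 2)
      ≤ 1 * Real.sqrt (∫ x, deriv (G (bb n)) x ^ 2) := by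
        apply mul_le_mul_of_nonneg_right _ (Real.sqrt_nonneg _)
        exact inv_le_one_of_one_le₀ (one_le_mm n)
    _ = Real.sqrt (∫ x, deriv (G (bb n)) x ^ 2) := one_mul _
    _ ≤ Real.sqrt (4 * Real.sqrt (π * bb n)) :=
        Real.sqrt_le_sqrt (integral_sq_deriv_G_le (bb_pos n))

lemma eLpNorm_cmul {f : ℝ → ℝ} (hf : MemLp f 2 (volume : Measure ℝ)) (a : ℝ) :
    eLpNorm (fun x => a * f x) 2 (volume : Measure ℝ)
      = ENNReal.ofReal (|a| * Real.sqrt (∫ x, f x ^ 2)) := by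
  have h : (fun x => a * f x) = a • f := rfl
  rw [h, eLpNorm_const_smul, eLpNorm_eq_sqrt hf, Real.enorm_eq_ofReal_abs,
    ← ENNReal.ofReal_mul (abs_nonneg a)]

lemma eLpNorm_combo_le {f g : ℝ → ℝ} (hf : MemLp f 2 (volume : Measure ℝ))
    (hg : MemLp g 2 (volume : Measure ℝ)) (a c : ℝ) :
    eLpNorm (fun x => a * f x + c * g x) 2 (volume : Measure ℝ) ≤
      ENNReal.ofReal (|a| * Real.sqrt (∫ x, f x ^ 2))
        + ENNReal.ofReal (|c| * Real.sqrt (∫ x, g x ^ 2)) := by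
  have h : (fun x => a * f x + c * g x) = (fun x => a * f x) + (fun x => c * g x) := rfl
  rw [h]
  refine (eLpNorm_add_le (hf.aestronglyMeasurable.const_mul a)
    (hg.aestronglyMeasurable.const_mul c) one_le_two).trans ?_
  rw [eLpNorm_cmul hf a, eLpNorm_cmul hg c]

lemma final (ν : ℝ) {η : ℝ → ℝ} (hηL2 : MemLp η 2 (volume : Measure ℝ))
    (hη'L2 : MemLp (deriv η) 2 (volume : Measure ℝ))
    (v : ℝ → ℝ) (hv : goodFn v)
    (d : ℕ → ℝ) (hd : Tendsto d atTop (nhds 0))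
    (hdv : ∀ n, d n * (∫ x, v x) = 0)
    (horth : ∀ n, (ν / mm n) * Lf η (G (bb n)) + d n * Lf η v = 0) :
    ∃ u : ℕ → ℝ → ℝ,
      (∀ n : ℕ, goodFn (u n)) ∧
      (∀ n : ℕ, (∫ x : ℝ, u n x) = ν) ∧
      (∀ n : ℕ, (∫ x : ℝ, (u n x * η x + deriv (u n) x * deriv η x)) = 0) ∧
      Tendsto (fun n : ℕ =>
          eLpNorm (u n) 2 (volume : Measure ℝ) + eLpNorm (deriv (u n)) 2 (volume : Measure ℝ))
        atTop (nhds 0) := by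
  refine ⟨fun n x => (ν / mm n) * G (bb n) x + d n * v x,
    fun n => (goodFn_G (bb_pos n)).combo hv _ _, fun n => ?_, fun n => ?_, ?_⟩
  · rw [integral_add (((goodFn_G (bb_pos n)).2.1).const_mul _) ((hv.2.1).const_mul _),
      integral_const_mul, integral_const_mul, integral_G_bb, hdv n]
    rw [div_mul_cancel₀ _ (mm_pos n).ne', add_zero]
  · have h := Lf_combo hηL2 hη'L2 (goodFn_G (bb_pos n)) hv (ν / mm n) (d n)
    exact h.trans (horth n)
  · have hGd : ∀ n, deriv (fun x => (ν / mm n) * G (bb n) x + d n * v x)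
        = fun x => (ν / mm n) * deriv (G (bb n)) x + d n * deriv v x :=
      fun n => deriv_combo (goodFn_G (bb_pos n)).1 hv.1 _ _
    have habs : ∀ n, |ν / mm n| = |ν| * (mm n)⁻¹ := by
      intro n; rw [abs_div, abs_of_pos (mm_pos n), div_eq_mul_inv]
    have hT1 : Tendsto (fun n => |ν / mm n| * Real.sqrt (∫ x, G (bb n) x ^ 2))
        atTop (nhds 0) := by
      have h := tendsto_q1.const_mul |ν|
      rw [mul_zero] at h
      exact h.congr (fun n => by rw [habs n]; ring)
    have hT3 : Tendsto (fun n => |ν / mm n| * Real.sqrt (∫ x, deriv (G (bb n)) x ^ 2))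
        atTop (nhds 0) := by
      have h := tendsto_q2.const_mul |ν|
      rw [mul_zero] at h
      exact h.congr (fun n => by rw [habs n]; ring)
    have hT2 : Tendsto (fun n => |d n| * Real.sqrt (∫ x, v x ^ 2)) atTop (nhds 0) := by
      have h := (hd.abs).mul_const (Real.sqrt (∫ x, v x ^ 2))
      simpa using h
    have hT4 : Tendsto (fun n => |d n| * Real.sqrt (∫ x, deriv v x ^ 2)) atTop (nhds 0) := by
      have h := (hd.abs).mul_const (Real.sqrt (∫ x, deriv v x ^ 2))
      simpa using h
    have hU : Tendsto (fun n =>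
        (ENNReal.ofReal (|ν / mm n| * Real.sqrt (∫ x, G (bb n) x ^ 2))
          + ENNReal.ofReal (|d n| * Real.sqrt (∫ x, v x ^ 2)))
        + (ENNReal.ofReal (|ν / mm n| * Real.sqrt (∫ x, deriv (G (bb n)) x ^ 2))
          + ENNReal.ofReal (|d n| * Real.sqrt (∫ x, deriv v x ^ 2))))
        atTop (nhds 0) := by
      have o1 := ENNReal.tendsto_ofReal hT1
      have o2 := ENNReal.tendsto_ofReal hT2
      have o3 := ENNReal.tendsto_ofReal hT3
      have o4 := ENNReal.tendsto_ofReal hT4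
      rw [ENNReal.ofReal_zero] at o1 o2 o3 o4
      have := (o1.add o2).add (o3.add o4)
      simpa using this
    refine tendsto_of_tendsto_of_tendsto_of_le_of_le tendsto_const_nhds hU
      (fun n => zero_le) (fun n => ?_)
    refine add_le_add ?_ ?_
    · exact eLpNorm_combo_le (goodFn_G (bb_pos n)).memL2 hv.memL2 _ _
    · rw [hGd n]
      exact eLpNorm_combo_le (goodFn_G (bb_pos n)).deriv_memL2 hv.deriv_memL2 _ _

end Stmt13

open Stmt13

/-- for every ν ∈ ℝ and η ∈ H²(ℝ), there is a sequence (u_n) of nice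
functions with ∫ u_n = ν, ⟨u_n, η⟩_{H¹} = 0, and u_n → 0 in H¹(ℝ). -/
theorem stmt13 (ν : ℝ) (η : ℝ → ℝ)
    (hη₁ : Differentiable ℝ η) (hη₂ : Differentiable ℝ (deriv η))
    (hηL2 : MemLp η 2 (volume : Measure ℝ))
    (hη'L2 : MemLp (deriv η) 2 (volume : Measure ℝ))
    (hη''L2 : MemLp (deriv (deriv η)) 2 (volume : Measure ℝ)) :
    ∃ u : ℕ → ℝ → ℝ,
      (∀ n : ℕ, goodFn (u n)) ∧
      (∀ n : ℕ, (∫ x : ℝ, u n x) = ν) ∧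
      (∀ n : ℕ, (∫ x : ℝ, (u n x * η x + deriv (u n) x * deriv η x)) = 0) ∧
      Tendsto (fun n : ℕ =>
          eLpNorm (u n) 2 (volume : Measure ℝ) + eLpNorm (deriv (u n)) 2 (volume : Measure ℝ))
        atTop (nhds 0) := by
  classical
  -- the key limit: (mm n)⁻¹ * Lf η (G (bb n)) → 0
  have he : Tendsto (fun n => (mm n)⁻¹ * Lf η (G (bb n))) atTop (nhds 0) := by
    have hlim : Tendsto (fun n =>
        (mm n)⁻¹ * Real.sqrt (∫ x, G (bb n) x ^ 2) * Real.sqrt (∫ x, η x ^ 2)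
        + (mm n)⁻¹ * Real.sqrt (∫ x, deriv (G (bb n)) x ^ 2) * Real.sqrt (∫ x, deriv η x ^ 2))
        atTop (nhds 0) := by
      have h := (tendsto_q1.mul_const (Real.sqrt (∫ x, η x ^ 2))).add
        (tendsto_q2.mul_const (Real.sqrt (∫ x, deriv η x ^ 2)))
      simpa using h
    refine squeeze_zero_norm (fun n => ?_) hlim
    rw [Real.norm_eq_abs, abs_mul, abs_of_pos (inv_pos.2 (mm_pos n))]
    calc (mm n)⁻¹ * |Lf η (G (bb n))|
        ≤ (mm n)⁻¹ * (Real.sqrt (∫ x, G (bb n) x ^ 2) * Real.sqrt (∫ x, η x ^ 2)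
          + Real.sqrt (∫ x, deriv (G (bb n)) x ^ 2) * Real.sqrt (∫ x, deriv η x ^ 2)) := by
          exact mul_le_mul_of_nonneg_left
            (abs_Lf_le hηL2 hη'L2 (goodFn_G (bb_pos n))) (inv_nonneg.2 (mm_pos n).le)
      _ = (mm n)⁻¹ * Real.sqrt (∫ x, G (bb n) x ^ 2) * Real.sqrt (∫ x, η x ^ 2)
          + (mm n)⁻¹ * Real.sqrt (∫ x, deriv (G (bb n)) x ^ 2)
            * Real.sqrt (∫ x, deriv η x ^ 2) := by ring
  by_cases hex : ∃ v : ℝ → ℝ, goodFn v ∧ (∫ x, v x) = 0 ∧ Lf η v ≠ 0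
  · obtain ⟨v, hv, hv0, hLv⟩ := hex
    refine final ν hηL2 hη'L2 v hv
      (fun n => -((ν / mm n) * Lf η (G (bb n))) / Lf η v) ?_ (fun n => by rw [hv0, mul_zero])
      (fun n => by rw [div_mul_cancel₀ _ hLv]; ring)
    · have h := (he.const_mul ν).mul_const (-(Lf η v)⁻¹)
      rw [mul_zero, zero_mul] at h
      refine h.congr (fun n => ?_)
      rw [div_eq_mul_inv, div_eq_mul_inv]
      ring
  · push_neg at hex
    have hw : ∀ n, Lf η (G (bb n)) = (mm n / mm 0) * Lf η (G (bb 0)) := by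
      intro n
      have hwgood := (goodFn_G (bb_pos n)).combo (goodFn_G (bb_pos 0)) 1 (-(mm n / mm 0))
      have hint0 : (∫ x, (1 * G (bb n) x + (-(mm n / mm 0)) * G (bb 0) x)) = 0 := by
        rw [integral_add (((goodFn_G (bb_pos n)).2.1).const_mul _)
            (((goodFn_G (bb_pos 0)).2.1).const_mul _), integral_const_mul, integral_const_mul,
          integral_G_bb, integral_G_bb]
        field_simp [(mm_pos 0).ne']
        ring
      have h0 := hex _ hwgood hint0
      rw [Lf_combo hηL2 hη'L2 (goodFn_G (bb_pos n)) (goodFn_G (bb_pos 0)) 1 (-(mm n / mm 0))] at h0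
      linarith [h0]
    have hconst : ∀ n, (mm n)⁻¹ * Lf η (G (bb n)) = Lf η (G (bb 0)) / mm 0 := by
      intro n
      rw [hw n, div_eq_mul_inv, div_eq_mul_inv]
      field_simp
      exact mul_div_mul_left _ _ (mm_pos n).ne'
    have h00 : Lf η (G (bb 0)) / mm 0 = 0 :=
      (tendsto_nhds_unique (he.congr hconst) tendsto_const_nhds).symm
    have hL0 : Lf η (G (bb 0)) = 0 := by
      rcases div_eq_zero_iff.1 h00 with h | h
      · exact h
      · exact absurd h (mm_pos 0).ne'
    have hLn : ∀ n, Lf η (G (bb n)) = 0 := fun n => by rw [hw n, hL0, mul_zero]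
    refine final ν hηL2 hη'L2 (G (bb 0)) (goodFn_G (bb_pos 0))
      (fun _ => 0) tendsto_const_nhds (fun n => by rw [zero_mul])
      (fun n => by rw [hLn n, mul_zero, zero_mul, add_zero])
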